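/- arXiv:1612.05381 — 2 statements merged into one kernel-verified Lean document; each statement's English description precedes it below -/
import Mathlib

section
/- If T is a tree with n vertices, then tmc(T) = l(T) + 1, where l(T) is the number of leaves of T (equivalently, tmc(T) = m − n + 2 + l(T) with m = n − 1). -/
open SimpleGraph

/-- A walk in a total-colored graph is *total monochromatic* if all of its edges and
internal vertices have the same color. -/
def IsTotalMonoWalk {V : Type*} {G : SimpleGraph V} (ce : Sym2 V → ℕ) (cv : V → ℕ)
    {u v : V} (w : G.Walk u v) : Prop :=
  ∃ c, (∀ e ∈ w.edges, ce e = c) ∧ ∀ x ∈ w.support.tail.dropLast, cv x = c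

/-- A total coloring (edge coloring `ce`, vertex coloring `cv`) of `G` is a
*TMC-coloring* if any two vertices are connected by a total monochromatic path. -/
def IsTMCColoring {V : Type*} (G : SimpleGraph V) (ce : Sym2 V → ℕ) (cv : V → ℕ) : Prop :=
  ∀ u v : V, u ≠ v → ∃ w : G.Walk u v, w.IsPath ∧ IsTotalMonoWalk ce cv w

/-- The number of colors used by a total coloring of `G`:
colors appearing on edges of `G` together with colors appearing on vertices. -/
noncomputable def colorsUsed {V : Type*} (G : SimpleGraph V) (ce : Sym2 V → ℕ) (cv : V → ℕ) : ℕ :=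
  (ce '' G.edgeSet ∪ Set.range cv).ncard

/-- The total monochromatic connection number `tmc G`: the maximum number of colors
used in a TMC-coloring of `G`. -/
noncomputable def tmc {V : Type*} [Fintype V] (G : SimpleGraph V) : ℕ :=
  sSup {k | ∃ ce cv, IsTMCColoring G ce cv ∧ colorsUsed G ce cv = k}

/-- The number of leaves (vertices of degree one) of a graph. -/
noncomputable def numLeaves {V : Type*} (T : SimpleGraph V) : ℕ :=
  {v : V | (T.neighborSet v).ncard = 1}.ncard

/-- `maxLeaves G` is the maximum number of leaves over all spanning trees of `G`. -/
noncomputable def maxLeaves {V : Type*} [Fintype V] (G : SimpleGraph V) : ℕ :=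
  sSup {k | ∃ T : SimpleGraph V, T ≤ G ∧ T.IsTree ∧ numLeaves T = k}

/-!
Paths in a tree are unique, so in a TMC-coloring the path `u - v - w` through any vertex `v` of
degree at least two is total monochromatic: the edges `uv`, `vw` and the vertex `v` get one color.
Hence all edges at a vertex agree, by connectedness all edges of the tree share a color `c`, and
every non-leaf has color `c` too; only the leaves can carry further colors. Conversely, coloring
all edges and non-leaves `0` and the leaves with distinct positive colors is a TMC-coloring with
`numLeaves + 1` colors, since a leaf is never an internal vertex of a path.
-/

namespace SimpleGraph

variable {V : Type*} {G : SimpleGraph V}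

def leafSet (G : SimpleGraph V) : Set V := {v | (G.neighborSet v).ncard = 1}

lemma numLeaves_eq_ncard_leafSet : numLeaves G = (G.leafSet).ncard := rfl

lemma notMem_leafSet_of_adj_of_adj [Finite V] {v a b : V} (hab : a ≠ b) (ha : G.Adj v a)
    (hb : G.Adj v b) : v ∉ G.leafSet :=
  ((Set.one_lt_ncard (Set.toFinite _)).2 ⟨a, ha, b, hb, hab⟩).ne'

lemma exists_ne_adj_of_notMem_leafSet [Finite V] {v a : V} (hv : v ∉ G.leafSet)
    (ha : G.Adj v a) : ∃ b, b ≠ a ∧ G.Adj v b := by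
  have hpos : 0 < (G.neighborSet v).ncard := (Set.ncard_pos (Set.toFinite _)).2 ⟨a, ha⟩
  obtain ⟨b, hb, hba⟩ := Set.exists_ne_of_one_lt_ncard (lt_of_le_of_ne hpos (Ne.symm hv)) a
  exact ⟨b, hba, hb⟩

lemma Walk.IsPath.exists_adj_adj_of_mem_internal {u v x : V} {w : G.Walk u v}
    (hw : w.IsPath) (hx : x ∈ w.support.tail.dropLast) :
    ∃ a b, a ≠ b ∧ G.Adj x a ∧ G.Adj x b := by
  induction w with
  | nil => simp at hx
  | @cons u b v h p ih =>
    rw [Walk.cons_isPath_iff] at hw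
    cases p with
    | nil => simp at hx
    | @cons b c v h' q =>
      rw [Walk.support_cons, List.tail_cons, Walk.support_cons,
        List.dropLast_cons_of_ne_nil q.support_ne_nil] at hx
      rcases List.mem_cons.1 hx with rfl | hx
      · refine ⟨u, c, ?_, h.symm, h'⟩
        rintro rfl
        exact hw.2 (List.mem_cons_of_mem _ q.start_mem_support)
      · exact ih hw.1 (by rwa [Walk.support_cons, List.tail_cons])

section TMC

variable {ce : Sym2 V → ℕ} {cv : V → ℕ}

lemma IsAcyclic.isTotalMonoWalk_of_isPath (hG : G.IsAcyclic) (h : IsTMCColoring G ce cv)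
    {u v : V} (huv : u ≠ v) {w : G.Walk u v} (hw : w.IsPath) : IsTotalMonoWalk ce cv w := by
  obtain ⟨p, hp, hmono⟩ := h u v huv
  obtain rfl : w = p := congrArg Subtype.val ((hG.subsingleton_path u v).elim ⟨w, hw⟩ ⟨p, hp⟩)
  exact hmono

lemma IsAcyclic.edge_color_eq_vertex_color (hG : G.IsAcyclic) (h : IsTMCColoring G ce cv)
    {u v w : V} (huv : G.Adj u v) (hvw : G.Adj v w) (huw : u ≠ w) :
    ce s(u, v) = cv v ∧ ce s(v, w) = cv v := by
  have hp : (Walk.cons huv (Walk.cons hvw Walk.nil)).IsPath := by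
    simp [Walk.isPath_def, huv.ne, hvw.ne, huw]
  obtain ⟨c, hce, hcv⟩ := hG.isTotalMonoWalk_of_isPath h huw hp
  have hv : cv v = c := hcv v (by simp)
  exact ⟨hv ▸ hce _ (by simp), hv ▸ hce _ (by simp)⟩

lemma IsAcyclic.edge_color_eq_of_adj_of_adj (hG : G.IsAcyclic) (h : IsTMCColoring G ce cv)
    {v a b : V} (ha : G.Adj v a) (hb : G.Adj v b) : ce s(v, a) = ce s(v, b) := by
  rcases eq_or_ne a b with rfl | hab
  · rfl
  · obtain ⟨h₁, h₂⟩ := hG.edge_color_eq_vertex_color h ha.symm hb hab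
    rw [Sym2.eq_swap, h₁, h₂]

lemma IsAcyclic.edge_color_eq_of_walk (hG : G.IsAcyclic) (h : IsTMCColoring G ce cv)
    {a x : V} (p : G.Walk a x) {b y : V} (hab : G.Adj a b) (hxy : G.Adj x y) :
    ce s(a, b) = ce s(x, y) := by
  induction p generalizing b with
  | nil => exact hG.edge_color_eq_of_adj_of_adj h hab hxy
  | cons hac p ih =>
    rw [hG.edge_color_eq_of_adj_of_adj h hab hac, Sym2.eq_swap]
    exact ih hac.symm hxy

lemma IsTree.edge_color_eq (hG : G.IsTree) (h : IsTMCColoring G ce cv) {e e' : Sym2 V}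
    (he : e ∈ G.edgeSet) (he' : e' ∈ G.edgeSet) : ce e = ce e' := by
  induction e using Sym2.ind with | _ a b =>
  induction e' using Sym2.ind with | _ x y =>
  exact hG.isAcyclic.edge_color_eq_of_walk h (hG.connected.preconnected a x).some he he'

lemma IsTree.exists_common_edge_and_nonleaf_color [Finite V] (hG : G.IsTree)
    (h : IsTMCColoring G ce cv) :
    ∃ c, (∀ e ∈ G.edgeSet, ce e = c) ∧ ∀ v ∉ G.leafSet, cv v = c := by
  have : Nonempty V := hG.connected.nonempty
  rcases subsingleton_or_nontrivial V with hV | hV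
  · refine ⟨cv (Classical.arbitrary V), fun e he => ?_,
      fun v _ => congrArg cv (Subsingleton.elim _ _)⟩
    induction e using Sym2.ind with | _ a b =>
    exact absurd (Subsingleton.elim a b) he.ne
  · have hadj := hG.connected.preconnected.exists_adj_of_nontrivial
    obtain ⟨v₀, b₀, h₀⟩ : ∃ v₀ b₀, G.Adj v₀ b₀ := ⟨_, hadj (Classical.arbitrary V)⟩
    refine ⟨ce s(v₀, b₀), fun e he => hG.edge_color_eq h he h₀, fun v hv => ?_⟩
    obtain ⟨a, ha⟩ := hadj v
    obtain ⟨b, hba, hb⟩ := exists_ne_adj_of_notMem_leafSet hv ha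
    rw [← (hG.isAcyclic.edge_color_eq_vertex_color h ha.symm hb hba.symm).2]
    exact hG.edge_color_eq h hb h₀

lemma IsTree.colorsUsed_le [Finite V] (hG : G.IsTree) (h : IsTMCColoring G ce cv) :
    colorsUsed G ce cv ≤ numLeaves G + 1 := by
  obtain ⟨c, hce, hcv⟩ := hG.exists_common_edge_and_nonleaf_color h
  have hsub : ce '' G.edgeSet ∪ Set.range cv ⊆ insert c (cv '' G.leafSet) := by
    rintro k (⟨e, he, rfl⟩ | ⟨v, rfl⟩)
    · exact .inl (hce e he)
    · by_cases hv : v ∈ G.leafSet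
      · exact .inr ⟨v, hv, rfl⟩
      · exact .inl (hcv v hv)
  calc colorsUsed G ce cv ≤ (insert c (cv '' G.leafSet)).ncard := Set.ncard_le_ncard hsub
    _ ≤ (cv '' G.leafSet).ncard + 1 := Set.ncard_insert_le _ _
    _ ≤ numLeaves G + 1 := by gcongr; exact Set.ncard_image_le

end TMC

lemma Connected.exists_isTMCColoring_colorsUsed_eq [Finite V] (hG : G.Connected) :
    ∃ ce cv, IsTMCColoring G ce cv ∧ colorsUsed G ce cv = numLeaves G + 1 := by
  classical
  obtain ⟨f, hf⟩ := exists_injective_nat V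
  let cv : V → ℕ := fun v => if v ∈ G.leafSet then f v + 1 else 0
  refine ⟨fun _ => 0, cv, fun u v _ => ?_, ?_⟩
  · let p := (hG.preconnected u v).some.toPath
    refine ⟨p.1, p.2, 0, fun _ _ => rfl, fun x hx => if_neg ?_⟩
    obtain ⟨a, b, hab, ha, hb⟩ := p.2.exists_adj_adj_of_mem_internal hx
    exact notMem_leafSet_of_adj_of_adj hab ha hb
  · have hzero : 0 ∉ cv '' G.leafSet := by
      rintro ⟨v, hv, hv0⟩
      simp [cv, hv] at hv0
    have hinj : Set.InjOn cv G.leafSet := fun a ha b hb hab => by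
      simpa [cv, ha, hb, hf.eq_iff] using hab
    have hcolors : (fun _ => 0) '' G.edgeSet ∪ Set.range cv = insert 0 (cv '' G.leafSet) := by
      refine Set.Subset.antisymm ?_ (Set.insert_subset ?_ ?_)
      · rintro k (⟨e, _, rfl⟩ | ⟨v, rfl⟩)
        · exact .inl rfl
        · by_cases hv : v ∈ G.leafSet
          · exact .inr ⟨v, hv, rfl⟩
          · exact .inl (if_neg hv)
      · obtain ⟨v⟩ := hG.nonempty
        by_cases hv : v ∈ G.leafSet
        · obtain ⟨a, ha⟩ := Set.nonempty_of_ncard_ne_zero (ne_of_eq_of_ne hv one_ne_zero)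
          exact .inl ⟨s(v, a), ha, rfl⟩
        · exact .inr ⟨v, if_neg hv⟩
      · exact (Set.image_subset_range _ _).trans Set.subset_union_right
    rw [colorsUsed, hcolors, Set.ncard_insert_of_notMem hzero, hinj.ncard_image,
      numLeaves_eq_ncard_leafSet]

end SimpleGraph

theorem stmt2 {V : Type*} [Fintype V] (T : SimpleGraph V) (hT : T.IsTree) :
    tmc T = numLeaves T + 1 :=
  IsGreatest.csSup_eq ⟨hT.connected.exists_isTMCColoring_colorsUsed_eq,
    fun _ ⟨_, _, h, hk⟩ => hk ▸ hT.colorsUsed_le h⟩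
end

section
/- Let G be a connected graph of order n > 3 with m edges. If G has a cut vertex, then tmc(G) = m − n + 2 + l(G). -/
/-!
Upper bound. Two vertices lying in different components of `G - v` can only be joined through
`v`, so in a TMC-colouring every vertex reaches the cut vertex `v` along a walk whose edges and
vertices (except the first) carry the colour `c` of `v`. Hence the edges of colour `c` contain a
spanning tree, which leaves at most `m - n + 2` edge colours, and the vertices of colour `c`
form a connected dominating set, whose complement consists of leaves of a spanning tree and so
has at most `l(G)` elements.

Lower bound. Give a maximum-leaf spanning tree and its internal vertices the colour `0`, and
every other edge and every leaf a colour of its own.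
-/

open SimpleGraph

lemma Set.ncard_image_add_ncard_inter_preimage_singleton_le {α β : Type*} {f : α → β}
    {s : Set α} (hs : s.Finite) (b : β) :
    (f '' s).ncard + (s ∩ f ⁻¹' {b}).ncard ≤ s.ncard + 1 := by
  have hsub : f '' s ⊆ insert b (f '' (s \ f ⁻¹' {b})) := by
    rintro _ ⟨a, ha, rfl⟩
    by_cases hab : f a = b
    · exact Or.inl hab
    · exact Or.inr ⟨a, ⟨ha, hab⟩, rfl⟩
  have hfin : (s \ f ⁻¹' {b}).Finite := hs.sdiff
  have himage : (f '' s).ncard ≤ (s \ f ⁻¹' {b}).ncard + 1 :=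
    calc (f '' s).ncard ≤ (insert b (f '' (s \ f ⁻¹' {b}))).ncard :=
          Set.ncard_le_ncard hsub ((hfin.image f).insert b)
      _ ≤ (f '' (s \ f ⁻¹' {b})).ncard + 1 := Set.ncard_insert_le _ _
      _ ≤ (s \ f ⁻¹' {b}).ncard + 1 := by gcongr; exact Set.ncard_image_le hfin
  have := Set.ncard_inter_add_ncard_sdiff_eq_ncard s (f ⁻¹' {b}) hs
  omega

namespace SimpleGraph.Walk

variable {V : Type*} {G : SimpleGraph V} {u v w x : V}

lemma mem_support_tail_dropLast {p : G.Walk u w} (hx : x ∈ p.support) (hxu : x ≠ u)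
    (hxw : x ≠ w) : x ∈ p.support.tail.dropLast := by
  rw [← List.tail_dropLast]
  grind [cons_tail_support, dropLast_support_concat]

lemma IsPath.mem_support_tail_dropLast_iff {p : G.Walk u w} (hp : p.IsPath) :
    x ∈ p.support.tail.dropLast ↔ x ∈ p.support ∧ x ≠ u ∧ x ≠ w := by
  refine ⟨fun hx => ?_, fun ⟨hx, hxu, hxw⟩ => mem_support_tail_dropLast hx hxu hxw⟩
  have hnd := hp.support_nodup
  rw [← List.tail_dropLast] at hx
  grind [cons_tail_support, dropLast_support_concat, List.nodup_append, List.dropLast_subset]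

lemma IsPath.exists_adj_adj_of_mem_support_tail_dropLast {p : G.Walk u w} (hp : p.IsPath)
    (hx : x ∈ p.support.tail.dropLast) : ∃ y z, y ≠ z ∧ G.Adj x y ∧ G.Adj x z := by
  obtain ⟨hxp, hxu, hxw⟩ := hp.mem_support_tail_dropLast_iff.1 hx
  obtain ⟨q, r, rfl⟩ := Walk.mem_support_iff_exists_append.1 hxp
  obtain ⟨z, hxz, r', rfl⟩ := exists_eq_cons_of_ne hxw r
  obtain ⟨y, hxy, q', hq⟩ := exists_eq_cons_of_ne hxu q.reverse
  have hy : y ∈ q.support := by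
    rw [← List.mem_reverse, ← support_reverse, hq]
    simp
  have hnd := hp.support_nodup
  rw [support_append] at hnd
  exact ⟨y, z, fun hyz => List.disjoint_of_nodup_append hnd hy (by simp [hyz]), hxy, hxz⟩

lemma IsPath.support_tail_takeUntil_subset [DecidableEq V] {p : G.Walk u w} (hp : p.IsPath)
    (hv : v ∈ p.support) (hvw : v ≠ w) :
    (p.takeUntil v hv).support.tail ⊆ p.support.tail.dropLast := by
  intro z hz
  have hnd := hp.support_nodup
  have hnd' := (hp.takeUntil hv).support_nodup
  rw [← p.take_spec hv, support_append] at hnd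
  have hw := end_mem_tail_support_of_ne hvw (p.dropUntil v hv)
  refine mem_support_tail_dropLast
    (p.support_takeUntil_subset_support hv (List.mem_of_mem_tail hz)) ?_ ?_
  · rintro rfl
    rw [← cons_tail_support] at hnd'
    exact (List.nodup_cons.1 hnd').1 hz
  · rintro rfl
    exact List.disjoint_of_nodup_append hnd (List.mem_of_mem_tail hz) hw

end SimpleGraph.Walk

section

variable {V : Type*} {G : SimpleGraph V} {v : V}

namespace SimpleGraph

lemma exists_not_reachable_induce_compl_singleton
    (hv : ¬ (G.induce ({v}ᶜ : Set V)).Connected) {x : V} (hx : x ≠ v) :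
    ∃ y, ∃ hy : y ≠ v, ¬ (G.induce ({v}ᶜ : Set V)).Reachable ⟨x, hx⟩ ⟨y, hy⟩ := by
  have : Nonempty ({v}ᶜ : Set V) := ⟨⟨x, hx⟩⟩
  obtain ⟨a, b, hab⟩ : ∃ a b, ¬ (G.induce ({v}ᶜ : Set V)).Reachable a b := by
    by_contra! h
    exact hv ⟨h⟩
  by_cases hxa : (G.induce ({v}ᶜ : Set V)).Reachable ⟨x, hx⟩ a
  · exact ⟨b, b.2, fun hxb => hab (hxa.symm.trans hxb)⟩
  · exact ⟨a, a.2, hxa⟩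

lemma mem_support_of_not_reachable_induce_compl_singleton {x y : V} {hx : x ≠ v} {hy : y ≠ v}
    (hxy : ¬ (G.induce ({v}ᶜ : Set V)).Reachable ⟨x, hx⟩ ⟨y, hy⟩) (p : G.Walk x y) :
    v ∈ p.support := by
  by_contra hvp
  exact hxy ⟨p.induce _ fun z hz => by rintro rfl; exact hvp hz⟩

end SimpleGraph

lemma IsTMCColoring.exists_walk_to_cutVertex {ce : Sym2 V → ℕ} {cv : V → ℕ}
    (h : IsTMCColoring G ce cv) (hv : ¬ (G.induce ({v}ᶜ : Set V)).Connected) (x : V) :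
    ∃ p : G.Walk x v, (∀ e ∈ p.edges, ce e = cv v) ∧ ∀ z ∈ p.support.tail, cv z = cv v := by
  classical
  by_cases hx : x = v
  · subst hx
    exact ⟨.nil, by simp, by simp⟩
  obtain ⟨y, hy, hxy⟩ := exists_not_reachable_induce_compl_singleton hv hx
  obtain ⟨p, hp, c, hce, hcv⟩ := h x y fun hxy' => hxy (by subst hxy'; rfl)
  have hvp := mem_support_of_not_reachable_induce_compl_singleton hxy p
  have hc : cv v = c := hcv v (Walk.mem_support_tail_dropLast hvp (Ne.symm hx) (Ne.symm hy))
  refine ⟨p.takeUntil v hvp, fun e he => ?_, fun z hz => ?_⟩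
  · rw [hc]
    exact hce e (p.edges_takeUntil_subset_edges hvp he)
  · rw [hc]
    exact hcv z (hp.support_tail_takeUntil_subset hvp (Ne.symm hy) hz)

lemma colorsUsed_le_ncard_image_add_ncard {ce : Sym2 V → ℕ} {cv : V → ℕ} [Finite V] {c : ℕ}
    (hc : c ∈ ce '' G.edgeSet) :
    colorsUsed G ce cv ≤ (ce '' G.edgeSet).ncard + {x | cv x ≠ c}.ncard := by
  have hsub : ce '' G.edgeSet ∪ Set.range cv ⊆ ce '' G.edgeSet ∪ cv '' {x | cv x ≠ c} := by
    rintro _ (hd | ⟨x, rfl⟩)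
    · exact Or.inl hd
    · by_cases hx : cv x = c
      · exact Or.inl (hx ▸ hc)
      · exact Or.inr ⟨x, hx, rfl⟩
  calc colorsUsed G ce cv ≤ (ce '' G.edgeSet ∪ cv '' {x | cv x ≠ c}).ncard :=
        Set.ncard_le_ncard hsub
    _ ≤ (ce '' G.edgeSet).ncard + (cv '' {x | cv x ≠ c}).ncard := Set.ncard_union_le _ _
    _ ≤ (ce '' G.edgeSet).ncard + {x | cv x ≠ c}.ncard := by gcongr; exact Set.ncard_image_le

lemma colorsUsed_le [Finite V] (ce : Sym2 V → ℕ) (cv : V → ℕ) :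
    colorsUsed G ce cv ≤ G.edgeSet.ncard + Nat.card V :=
  (Set.ncard_union_le _ _).trans <| add_le_add Set.ncard_image_le <|
    Set.image_univ (f := cv) ▸ (Set.ncard_image_le).trans (Set.ncard_le_card _)

namespace SimpleGraph

lemma card_le_ncard_edgeSet_inter_preimage_add_one [Finite V] (ce : Sym2 V → ℕ) (c : ℕ)
    (h : ∀ x, ∃ p : G.Walk x v, ∀ e ∈ p.edges, ce e = c) :
    Nat.card V ≤ (G.edgeSet ∩ ce ⁻¹' {c}).ncard + 1 := by
  set K := G.deleteEdges {e | ce e ≠ c}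
  have hK : K.edgeSet = G.edgeSet ∩ ce ⁻¹' {c} := by
    ext e
    simp [K, edgeSet_deleteEdges]
  have hreach : ∀ x, K.Reachable x v := fun x =>
    have ⟨p, hp⟩ := h x
    ⟨p.transfer K fun e he => by
      rw [hK]
      exact ⟨p.edges_subset_edgeSet he, hp e he⟩⟩
  have : Nonempty V := ⟨v⟩
  have hKconn : K.Connected := ⟨fun x y => (hreach x).trans (hreach y).symm⟩
  simpa [hK, Nat.card_coe_set_eq] using hKconn.card_vert_le_card_edgeSet_add_one

end SimpleGraph

lemma bddAbove_colorsUsed [Finite V] :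
    BddAbove {k | ∃ ce cv, IsTMCColoring G ce cv ∧ colorsUsed G ce cv = k} :=
  ⟨G.edgeSet.ncard + Nat.card V, by rintro _ ⟨ce, cv, -, rfl⟩; exact colorsUsed_le ce cv⟩

lemma IsTMCColoring.colorsUsed_le_tmc [Fintype V] {ce : Sym2 V → ℕ} {cv : V → ℕ}
    (h : IsTMCColoring G ce cv) : colorsUsed G ce cv ≤ tmc G :=
  le_csSup bddAbove_colorsUsed ⟨ce, cv, h, rfl⟩

lemma IsTMCColoring.exists_colorsUsed_eq_tmc [Fintype V] {ce : Sym2 V → ℕ} {cv : V → ℕ}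
    (h : IsTMCColoring G ce cv) :
    ∃ ce' cv', IsTMCColoring G ce' cv' ∧ colorsUsed G ce' cv' = tmc G :=
  Nat.sSup_mem (s := {k | ∃ ce cv, IsTMCColoring G ce cv ∧ colorsUsed G ce cv = k})
    ⟨colorsUsed G ce cv, ce, cv, h, rfl⟩ bddAbove_colorsUsed

namespace SimpleGraph

lemma bddAbove_numLeaves [Finite V] :
    BddAbove {k | ∃ T : SimpleGraph V, T ≤ G ∧ T.IsTree ∧ numLeaves T = k} :=
  ⟨Nat.card V, by rintro _ ⟨T, -, -, rfl⟩; exact Set.ncard_le_card _⟩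

lemma numLeaves_le_maxLeaves [Fintype V] {T : SimpleGraph V} (hTG : T ≤ G) (hT : T.IsTree) :
    numLeaves T ≤ maxLeaves G :=
  le_csSup bddAbove_numLeaves ⟨T, hTG, hT, rfl⟩

lemma Connected.exists_numLeaves_eq_maxLeaves [Fintype V] (hG : G.Connected) :
    ∃ T ≤ G, T.IsTree ∧ numLeaves T = maxLeaves G :=
  have ⟨T, hTG, hT⟩ := hG.exists_isTree_le
  Nat.sSup_mem (s := {k | ∃ T : SimpleGraph V, T ≤ G ∧ T.IsTree ∧ numLeaves T = k})
    ⟨numLeaves T, T, hTG, hT, rfl⟩ bddAbove_numLeaves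

lemma connected_induce_of_forall_walk {S : Set V} (hv : v ∈ S)
    (h : ∀ x ∈ S, ∃ p : G.Walk x v, ∀ z ∈ p.support, z ∈ S) : (G.induce S).Connected := by
  have : Nonempty S := ⟨⟨v, hv⟩⟩
  have hreach : ∀ x : S, (G.induce S).Reachable x ⟨v, hv⟩ := fun x =>
    have ⟨p, hp⟩ := h x x.2
    ⟨p.induce S hp⟩
  exact ⟨fun x y => (hreach x).trans (hreach y).symm⟩

/-- Every vertex outside `S` is a leaf of a spanning tree of the graph formed by `G[S]` together
with one edge from each vertex outside `S` into `S`. -/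
lemma ncard_compl_le_maxLeaves [Fintype V] {S : Set V} (hS : (G.induce S).Connected)
    (hdom : ∀ x ∉ S, ∃ y ∈ S, G.Adj x y) : Sᶜ.ncard ≤ maxLeaves G := by
  choose f hfS hfG using fun x : ↥Sᶜ => hdom x x.2
  set H := fromRel fun a b => (a ∈ S ∧ b ∈ S ∧ G.Adj a b) ∨ ∃ ha : a ∉ S, b = f ⟨a, ha⟩
  have hHG : H ≤ G := by
    rintro a b ⟨-, (⟨-, -, hab⟩ | ⟨ha, rfl⟩) | (⟨-, -, hba⟩ | ⟨hb, rfl⟩)⟩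
    exacts [hab, hfG ⟨a, ha⟩, hba.symm, (hfG ⟨b, hb⟩).symm]
  have hHnbr : ∀ (a : V) (ha : a ∉ S), H.neighborSet a ⊆ {f ⟨a, ha⟩} := by
    rintro a ha b ⟨-, (⟨ha', -⟩ | ⟨-, rfl⟩) | (⟨-, ha', -⟩ | ⟨hb, rfl⟩)⟩
    exacts [absurd ha' ha, rfl, absurd ha' ha, absurd (hfS _) ha]
  have hreachS : ∀ a ∈ S, ∀ b ∈ S, H.Reachable a b := fun a ha b hb =>
    (hS.preconnected ⟨a, ha⟩ ⟨b, hb⟩).map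
      ⟨Subtype.val, fun {x y} hxy => (fromRel_adj _ _ _).2 ⟨(induce_adj.1 hxy).ne, by
        left; left; exact ⟨x.2, y.2, hxy⟩⟩⟩
  have hreach : ∀ a, ∃ s ∈ S, H.Reachable a s := fun a => by
    by_cases ha : a ∈ S
    · exact ⟨a, ha, .rfl⟩
    · refine ⟨f ⟨a, ha⟩, hfS _, Adj.reachable ?_⟩
      exact (fromRel_adj _ _ _).2 ⟨(hfG ⟨a, ha⟩).ne, Or.inl (Or.inr ⟨ha, rfl⟩)⟩
  have : Nonempty V := ⟨hS.nonempty.some.1⟩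
  have hH : H.Connected := ⟨fun a b =>
    have ⟨s, hs, has⟩ := hreach a
    have ⟨t, ht, hbt⟩ := hreach b
    has.trans ((hreachS s hs t ht).trans hbt.symm)⟩
  obtain ⟨T, hTH, hT⟩ := hH.exists_isTree_le
  have hleaf : ∀ (a : V) (ha : a ∉ S), T.neighborSet a = {f ⟨a, ha⟩} := fun a ha => by
    obtain ⟨p⟩ := hT.connected.preconnected a (f ⟨a, ha⟩)
    have hp : ¬ p.Nil := Walk.not_nil_of_ne fun h => ha (h ▸ hfS _)
    have hsub : T.neighborSet a ⊆ {f ⟨a, ha⟩} := fun b hb => hHnbr a ha (hTH hb)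
    exact Set.eq_singleton_iff_nonempty_unique_mem.2
      ⟨⟨p.snd, p.adj_snd hp⟩, fun b hb => hsub hb⟩
  calc Sᶜ.ncard ≤ numLeaves T :=
        Set.ncard_le_ncard fun a ha => by simp [hleaf a ha]
    _ ≤ maxLeaves G := numLeaves_le_maxLeaves (hTH.trans hHG) hT

end SimpleGraph

theorem IsTMCColoring.colorsUsed_add_card_le [Fintype V] [Nontrivial V] {ce : Sym2 V → ℕ}
    {cv : V → ℕ} (h : IsTMCColoring G ce cv) (hv : ¬ (G.induce ({v}ᶜ : Set V)).Connected) :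
    colorsUsed G ce cv + Nat.card V ≤ G.edgeSet.ncard + 2 + maxLeaves G := by
  set c := cv v
  choose p hpe hpv using h.exists_walk_to_cutVertex hv
  have hedges : Nat.card V ≤ (G.edgeSet ∩ ce ⁻¹' {c}).ncard + 1 :=
    card_le_ncard_edgeSet_inter_preimage_add_one ce c fun x => ⟨p x, hpe x⟩
  have hc : c ∈ ce '' G.edgeSet := by
    obtain ⟨e, he, hce⟩ : (G.edgeSet ∩ ce ⁻¹' {c}).Nonempty :=
      Set.nonempty_of_ncard_ne_zero (by have := Finite.one_lt_card (α := V); omega)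
    exact ⟨e, he, hce⟩
  have hS : (G.induce {x | cv x = c}).Connected :=
    connected_induce_of_forall_walk rfl fun x hx => ⟨p x, fun z hz => by
      rw [← Walk.cons_tail_support] at hz
      exact (List.mem_cons.1 hz).elim (· ▸ hx) (hpv x z)⟩
  have hdom : ∀ x ∉ {x | cv x = c}, ∃ y ∈ {x | cv x = c}, G.Adj x y := fun x hx =>
    have hnil : ¬ (p x).Nil := Walk.not_nil_of_ne fun hxv => hx (hxv ▸ rfl)
    ⟨(p x).snd, hpv x _ (Walk.snd_mem_tail_support hnil), Walk.adj_snd hnil⟩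
  have hleaves : {x | cv x ≠ c}.ncard ≤ maxLeaves G := ncard_compl_le_maxLeaves hS hdom
  have hcount := Set.ncard_image_add_ncard_inter_preimage_singleton_le (f := ce) G.edgeSet.toFinite c
  have hcolors := colorsUsed_le_ncard_image_add_ncard (cv := cv) hc
  omega

namespace SimpleGraph

open Classical in
noncomputable def treeEdgeColoring (T : SimpleGraph V) (ι : Sym2 V ⊕ V → ℕ) (e : Sym2 V) : ℕ :=
  if e ∈ T.edgeSet then 0 else ι (.inl e) + 1

open Classical in
noncomputable def treeVertexColoring (T : SimpleGraph V) (ι : Sym2 V ⊕ V → ℕ) (x : V) : ℕ :=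
  if (T.neighborSet x).ncard = 1 then ι (.inr x) + 1 else 0

/-- Tree paths are monochromatic of colour `0`: an internal vertex of a path has two
neighbours, so it is not a leaf. -/
lemma IsTree.isTMCColoring_treeColoring {T : SimpleGraph V} (hT : T.IsTree) (hTG : T ≤ G)
    (ι : Sym2 V ⊕ V → ℕ) : IsTMCColoring G (treeEdgeColoring T ι) (treeVertexColoring T ι) := by
  intro u w _
  obtain ⟨q, hq, -⟩ := hT.existsUnique_path u w
  refine ⟨q.mapLe hTG, hq.mapLe hTG, 0, fun e he => ?_, fun x hx => ?_⟩
  · rw [Walk.edges_mapLe_eq_edges] at he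
    simp [treeEdgeColoring, q.edges_subset_edgeSet he]
  · rw [Walk.support_mapLe_eq_support] at hx
    obtain ⟨y, z, hyz, hy, hz⟩ := hq.exists_adj_adj_of_mem_support_tail_dropLast hx
    have hnotLeaf : (T.neighborSet x).ncard ≠ 1 := by
      rw [Ne, Set.ncard_eq_one]
      rintro ⟨a, ha⟩
      have hy' : y ∈ T.neighborSet x := hy
      have hz' : z ∈ T.neighborSet x := hz
      rw [ha] at hy' hz'
      exact hyz (hy'.trans hz'.symm)
    simp [treeVertexColoring, hnotLeaf]

lemma IsTree.le_colorsUsed_treeColoring [Finite V] [Nontrivial V] {T : SimpleGraph V}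
    (hT : T.IsTree) (hTG : T ≤ G) {ι : Sym2 V ⊕ V → ℕ} (hι : ι.Injective) :
    G.edgeSet.ncard + 2 + numLeaves T ≤
      colorsUsed G (treeEdgeColoring T ι) (treeVertexColoring T ι) + Nat.card V := by
  set κ : Sym2 V ⊕ V → ℕ := fun a => ι a + 1
  set A := G.edgeSet \ T.edgeSet
  set L := {x | (T.neighborSet x).ncard = 1}
  have hTcard : T.edgeSet.ncard + 1 = Nat.card V := by
    rw [← Nat.card_coe_set_eq]
    exact (isTree_iff_connected_and_card.1 hT).2
  have hA : A.ncard + T.edgeSet.ncard = G.edgeSet.ncard :=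
    Set.ncard_sdiff_add_ncard_of_subset (edgeSet_mono hTG)
  have hsub : insert 0 (κ '' (Sum.inl '' A ∪ Sum.inr '' L)) ⊆
      treeEdgeColoring T ι '' G.edgeSet ∪ Set.range (treeVertexColoring T ι) := by
    rintro _ (rfl | ⟨_, ⟨e, ⟨heG, heT⟩, rfl⟩ | ⟨x, hx, rfl⟩, rfl⟩)
    · obtain ⟨e, he⟩ : T.edgeSet.Nonempty := Set.nonempty_of_ncard_ne_zero
        (by have := Finite.one_lt_card (α := V); omega)
      exact Or.inl ⟨e, edgeSet_mono hTG he, by simp [treeEdgeColoring, he]⟩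
    · exact Or.inl ⟨e, heG, by simp [treeEdgeColoring, heT, κ]⟩
    · exact Or.inr ⟨x, by simp [treeVertexColoring, hx.out, κ]⟩
  have hκ : κ.Injective := fun a b hab => hι (Nat.succ_injective hab)
  have hcard : (insert 0 (κ '' (Sum.inl '' A ∪ Sum.inr '' L))).ncard = A.ncard + L.ncard + 1 := by
    rw [Set.ncard_insert_of_notMem (by simp [κ]), Set.ncard_image_of_injective _ hκ,
      Set.ncard_union_eq Set.disjoint_image_inl_image_inr,
      Set.ncard_image_of_injective _ Sum.inl_injective,
      Set.ncard_image_of_injective _ Sum.inr_injective]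
  have hle := Set.ncard_le_ncard hsub
  rw [hcard] at hle
  have hL : numLeaves T = L.ncard := rfl
  rw [colorsUsed, hL]
  omega

end SimpleGraph

end

theorem stmt7 {V : Type*} [Fintype V] (G : SimpleGraph V) (hG : G.Connected)
    (hn : 3 < Fintype.card V)
    (hcut : ∃ v : V, ¬ (G.induce ({v}ᶜ : Set V)).Connected) :
    (tmc G : ℤ) = (G.edgeSet.ncard : ℤ) - (Fintype.card V : ℤ) + 2 + (maxLeaves G : ℤ) := by
  have : Nontrivial V := Fintype.one_lt_card_iff_nontrivial.1 (by omega)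
  obtain ⟨v, hv⟩ := hcut
  obtain ⟨T, hTG, hT, hTleaves⟩ := hG.exists_numLeaves_eq_maxLeaves
  obtain ⟨ι, hι⟩ := exists_injective_nat (Sym2 V ⊕ V)
  have hTmc := hT.isTMCColoring_treeColoring hTG ι
  have hlower := hT.le_colorsUsed_treeColoring hTG hι
  have htree_le_tmc := hTmc.colorsUsed_le_tmc
  obtain ⟨ce, cv, h, htmc⟩ := hTmc.exists_colorsUsed_eq_tmc
  have hupper := h.colorsUsed_add_card_le hv
  rw [Nat.card_eq_fintype_card] at hlower hupper
  omega
end
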